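/- Let X, Y be analytic subsets of standard Borel spaces, K : X → Y an analytic map, (E_α)_{α<ω₁} a uniformly analytic refining family of equivalence relations on X with intersection E_∞, and F a Borel equivalence relation on Y. If x E_∞ x' implies K(x) F K(x'), then there exists β < ω₁ such that x E_β x' already implies K(x) F K(x'). -/

import Mathlib

/-- A subset of a measurable space is *analytic* if it is the image of a Borel
subset of Baire space under a Borel map. -/
def IsAnalyticSet {X : Type*} [MeasurableSpace X] (s : Set X) : Prop :=
  ∃ (B : Set (ℕ → ℕ)) (f : (ℕ → ℕ) → X), MeasurableSet B ∧ Measurable f ∧ f '' B = s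

/-- Codes for linear orders on subsets of ω. -/
abbrev LOCode : Type := (ℕ → Bool) × (ℕ × ℕ → Bool)

namespace LOCode

def dom (I : LOCode) (n : ℕ) : Prop := I.1 n = true

def le (I : LOCode) (m n : ℕ) : Prop := I.2 (m, n) = true

def IsLO (I : LOCode) : Prop :=
  (∀ m n, I.le m n → I.dom m ∧ I.dom n) ∧
  (∀ m, I.dom m → I.le m m) ∧
  (∀ m n, I.le m n → I.le n m → m = n) ∧
  (∀ m n k, I.le m n → I.le n k → I.le m k) ∧
  (∀ m n, I.dom m → I.dom n → I.le m n ∨ I.le n m)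

def IsWO (I : LOCode) : Prop :=
  I.IsLO ∧ ∀ s : Set ℕ, s.Nonempty → (∀ n ∈ s, I.dom n) → ∃ m ∈ s, ∀ n ∈ s, I.le m n

/-- `I` embeds (as a linear order) into `J`. -/
def Embeds (I J : LOCode) : Prop :=
  ∃ f : ℕ → ℕ, (∀ n, I.dom n → J.dom (f n)) ∧
    ∀ m n, I.dom m → I.dom n → (I.le m n ↔ J.le (f m) (f n))

/-- `ω*`, the reversed order on all of ω. -/
def omegaStar : LOCode := (fun _ => true, fun p => decide (p.2 ≤ p.1))

end LOCode

/-- The section of a family `R ⊆ X × LO` at a linear order code `I`. -/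
def LOsection {X : Type*} (R : Set (X × LOCode)) (I : LOCode) : Set X :=
  {x | (x, I) ∈ R}

/-- A family `R ⊆ X × LO` is *refining* if `R_I ⊇ R_{I'}` whenever the linear
order `I` embeds into `I'`. -/
def Refining {X : Type*} (R : Set (X × LOCode)) : Prop :=
  ∀ I J : LOCode, I.IsLO → J.IsLO → LOCode.Embeds I J →
    LOsection R J ⊆ LOsection R I


/-- `E ⊆ α × α` is an equivalence relation on the subset `A`. -/
def IsEquivOn {α : Type*} (A : Set α) (E : Set (α × α)) : Prop :=
  (∀ a ∈ A, (a, a) ∈ E) ∧ (∀ a b, (a, b) ∈ E → (b, a) ∈ E) ∧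
  (∀ a b c, (a, b) ∈ E → (b, c) ∈ E → (a, c) ∈ E)


open List

noncomputable section
open scoped Classical

instance gtIsSTO : IsStrictTotalOrder ℕ (· > ·) where
  trichotomous a b := by
    intro h1 h2
    omega
  irrefl a := lt_irrefl a
  trans a b c h h' := lt_trans h' h

/-- Kleene–Brouwer strict order on finite sequences. -/
def KBlt (s t : List ℕ) : Prop := List.Lex (· > ·) t s

def KBle (s t : List ℕ) : Prop := KBlt s t ∨ s = t

theorem KBlt.trans {s t u : List ℕ} (h : KBlt s t) (h' : KBlt t u) : KBlt s u :=
  IsTrans.trans (self := (isStrictWeakOrder_of_isOrderConnected (α := List ℕ) (r := List.Lex (· > ·))).toIsTrans) u t s h' h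

theorem KBlt.asymm {s t : List ℕ} (h : KBlt s t) (h' : KBlt t s) : False :=
  (Std.Asymm.asymm (r := List.Lex (· > ·)) t s h) h'

theorem KBlt.irrefl {s : List ℕ} (h : KBlt s s) : False := h.asymm h

theorem KBle.refl (s : List ℕ) : KBle s s := Or.inr rfl

theorem KBle.antisymm {s t : List ℕ} (h : KBle s t) (h' : KBle t s) : s = t := by
  rcases h with h | h
  · rcases h' with h' | h'
    · exact absurd h' h.asymm
    · exact h'.symm
  · exact h

theorem KBle.trans {s t u : List ℕ} (h : KBle s t) (h' : KBle t u) : KBle s u := by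
  rcases h with h | rfl
  · rcases h' with h' | rfl
    · exact Or.inl (h.trans h')
    · exact Or.inl h
  · exact h'

theorem KBle.total (s t : List ℕ) : KBle s t ∨ KBle t s := by
  rcases trichotomous_of (List.Lex (· > ·)) s t with h | h | h
  · exact Or.inr (Or.inl h)
  · exact Or.inl (Or.inr h)
  · exact Or.inl (Or.inl h)

/-- a proper prefix is KB-larger. -/
theorem lex_of_proper_prefix {r : ℕ → ℕ → Prop} :
    ∀ {s t : List ℕ}, s <+: t → s ≠ t → List.Lex r s t := by
  intro s
  induction s with
  | nil => intro t _ hne; cases t with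
    | nil => exact absurd rfl hne
    | cons a l => exact List.Lex.nil
  | cons a l ih => intro t hp hne; cases t with
    | nil => exact absurd (List.prefix_nil.mp hp) hne
    | cons b m =>
      obtain ⟨u, hu⟩ := hp
      injection hu with h1 h2
      subst h1
      exact List.Lex.cons (ih ⟨u, h2⟩ (fun h => hne (by rw [h])))

theorem KBlt_of_proper_prefix {s t : List ℕ} (hp : s <+: t) (hne : s ≠ t) : KBlt t s :=
  lex_of_proper_prefix hp hne

/-- cancel a common prefix on the left in `List.Lex`. -/
theorem lex_append_left_cancel : ∀ (c l₁ l₂ : List ℕ),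
    List.Lex (· > ·) (c ++ l₁) (c ++ l₂) → List.Lex (· > ·) l₁ l₂ := by
  intro c
  induction c with
  | nil => intro l₁ l₂ h; exact h
  | cons a c ih =>
    intro l₁ l₂ h
    cases h with
    | rel h => exact absurd rfl (ne_of_gt h)
    | cons h => exact ih _ _ h

theorem KBlt_chain (t : ℕ → List ℕ) (hd : ∀ n, KBlt (t (n + 1)) (t n)) :
    ∀ m n, n < m → KBlt (t m) (t n) := by
  intro m
  induction m with
  | zero => intro n hn; omega
  | succ m ih =>
    intro n hn
    rcases Nat.lt_or_ge n m with h | h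
    · exact (hd m).trans (ih n h)
    · have : n = m := by omega
      subst this; exact hd n

theorem KB_step (t : ℕ → List ℕ) (hd : ∀ n, KBlt (t (n + 1)) (t n))
    (c : List ℕ) (N : ℕ) (H : ∀ n ≥ N, c <+: t n) :
    ∃ b N', ∀ n ≥ N', (c ++ [b]) <+: t n := by
  -- first get rid of the (at most one) index where `t n = c`
  obtain ⟨N₁, hN₁, hne⟩ : ∃ N₁ ≥ N, ∀ n ≥ N₁, t n ≠ c := by
    by_cases hex : ∃ n, N ≤ n ∧ t n = c
    · obtain ⟨n₀, hn₀, hc⟩ := hex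
      refine ⟨n₀ + 1, by omega, fun n hn h => ?_⟩
      have := KBlt_chain t hd n n₀ (by omega)
      rw [h, ← hc] at this
      exact this.irrefl
    · push_neg at hex
      exact ⟨N, le_refl N, fun n hn => hex n hn⟩
  have hpre : ∀ n ≥ N₁, t n = c ++ (t n).drop c.length ∧ (t n).drop c.length ≠ [] := by
    intro n hn
    have hp : c <+: t n := H n (le_trans hN₁ hn)
    obtain ⟨u, hu⟩ := hp
    have hdrop : (t n).drop c.length = u := by rw [← hu, List.drop_left]
    refine ⟨by rw [hdrop, hu], ?_⟩
    rw [hdrop]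
    rintro rfl
    exact hne n hn (by simp [← hu])
  set d : ℕ → List ℕ := fun n => (t n).drop c.length with hd_def
  set v : ℕ → ℕ := fun n => (d n).headI with hv_def
  have hcons : ∀ n ≥ N₁, d n = v n :: (d n).tail := by
    intro n hn
    have := (hpre n hn).2
    cases hdn : d n with
    | nil => exact absurd hdn this
    | cons a l => simp [hv_def, hdn]
  have hmono : ∀ n ≥ N₁, v (n + 1) ≤ v n := by
    intro n hn
    have h1 : List.Lex (· > ·) (c ++ d n) (c ++ d (n + 1)) := by
      have := hd n
      unfold KBlt at this
      rwa [← (hpre n hn).1, ← (hpre (n + 1) (by omega)).1]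
    have h2 := lex_append_left_cancel c _ _ h1
    obtain ⟨a, l, ha⟩ : ∃ a l, d n = a :: l := ⟨v n, (d n).tail, hcons n hn⟩
    obtain ⟨b, m, hb⟩ : ∃ b m, d (n + 1) = b :: m := ⟨v (n + 1), (d (n + 1)).tail, hcons (n + 1) (by omega)⟩
    have hva : v n = a := by simp [hv_def, ha]
    have hvb : v (n + 1) = b := by simp [hv_def, hb]
    rw [ha, hb] at h2
    rw [hva, hvb]
    cases h2 with
    | rel h => exact le_of_lt h
    | cons h => exact le_refl _
  set w : ℕ → ℕ := fun k => v (N₁ + k) with hw_def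
  have hw : Antitone w := antitone_nat_of_succ_le (fun k => by
    have h := hmono (N₁ + k) (by omega)
    show v (N₁ + (k + 1)) ≤ v (N₁ + k)
    have : N₁ + (k + 1) = (N₁ + k) + 1 := by omega
    rw [this]
    exact h)
  obtain ⟨k₀, hk₀⟩ : ∃ k₀, w k₀ = sInf (Set.range w) :=
    Nat.sInf_mem (Set.range_nonempty w)
  refine ⟨w k₀, N₁ + k₀, fun n hn => ?_⟩
  have hn₁ : n ≥ N₁ := by omega
  have hvn : v n = w k₀ := by
    have h1 : v n = w (n - N₁) := by
      simp [hw_def]; congr 1; omega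
    have h2 : w (n - N₁) ≤ w k₀ := hw (show k₀ ≤ n - N₁ by omega)
    have h3 : w k₀ ≤ w (n - N₁) := by
      rw [hk₀]; exact Nat.sInf_le ⟨n - N₁, rfl⟩
    omega
  refine ⟨(d n).tail, ?_⟩
  calc (c ++ [w k₀]) ++ (d n).tail = c ++ (w k₀ :: (d n).tail) := by simp
    _ = c ++ d n := by rw [← hvn, ← hcons n hn₁]
    _ = t n := ((hpre n hn₁).1).symm

/-- from a KB-strictly-decreasing sequence one can extract an infinite branch. -/
theorem exists_branch_of_KB_descending (t : ℕ → List ℕ)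
    (hd : ∀ n, KBlt (t (n + 1)) (t n)) :
    ∃ z : ℕ → ℕ, ∀ k, ∃ n, (List.range k).map z <+: t n := by
  classical
  let S := {p : List ℕ × ℕ // ∀ n ≥ p.2, p.1 <+: t n}
  have step : ∀ p : S, ∃ b N', ∀ n ≥ N', (p.1.1 ++ [b]) <+: t n :=
    fun p => KB_step t hd p.1.1 p.1.2 p.2
  let g : S → S := fun p =>
    ⟨(p.1.1 ++ [(step p).choose], (step p).choose_spec.choose),
      (step p).choose_spec.choose_spec⟩
  have hg : ∀ p : S, (g p).1.1 = p.1.1 ++ [(step p).choose] := fun p => rfl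
  let c : ℕ → S := fun k => g^[k] ⟨([], 0), fun n _ => List.nil_prefix⟩
  have hcsucc : ∀ k, c (k + 1) = g (c k) := by
    intro k
    show g^[k+1] _ = g (g^[k] _)
    rw [Function.iterate_succ_apply']
  have hlen : ∀ k, ((c k).1.1).length = k := by
    intro k
    induction k with
    | zero => rfl
    | succ k ih => rw [hcsucc k, hg]; simp [ih]
  set z : ℕ → ℕ := fun k => ((c (k + 1)).1.1).getD k 0 with hz_def
  have hpre : ∀ k, (List.range k).map z = (c k).1.1 := by
    intro k
    induction k with
    | zero => rfl
    | succ k ih =>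
      have hzk : z k = (step (c k)).choose := by
        show ((c (k + 1)).1.1).getD k 0 = (step (c k)).choose
        rw [hcsucc k, hg, List.getD_append_right _ _ _ _ (by rw [hlen k]), hlen k]
        simp
      rw [List.range_succ, List.map_append, hcsucc k, hg, ih]
      simp [hzk]
  exact ⟨z, fun k => ⟨(c k).1.2, by rw [hpre k]; exact (c k).2 (c k).1.2 (le_refl _)⟩⟩

end

section KBMachinery
open MeasureTheory
open scoped Classical
noncomputable section

/-- encoding of finite sequences by naturals -/
def eL : List ℕ ≃ ℕ := Denumerable.eqv _
/-- encoding of pairs of finite sequences by naturals -/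
def eP : List ℕ × List ℕ ≃ ℕ := Denumerable.eqv _

/-- the finite initial segment of `x` of length `n`, as a list. -/
def pre (x : ℕ → ℕ) (n : ℕ) : List ℕ := (List.range n).map x

@[simp] theorem pre_length (x : ℕ → ℕ) (n : ℕ) : (pre x n).length = n := by
  simp [pre]

theorem pre_take (x : ℕ → ℕ) {k n : ℕ} (h : k ≤ n) : (pre x n).take k = pre x k := by
  simp [pre, ← List.map_take, List.take_range, Nat.min_eq_left h]

theorem pre_succ (x : ℕ → ℕ) (n : ℕ) : pre x (n + 1) = pre x n ++ [x n] := by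
  simp [pre, List.range_succ]

theorem pre_prefix (x : ℕ → ℕ) {k n : ℕ} (h : k ≤ n) : pre x k <+: pre x n := by
  rw [← pre_take x h]; exact List.take_prefix _ _

theorem pre_eq_iff {x y : ℕ → ℕ} {n : ℕ} : pre x n = pre y n ↔ ∀ i < n, x i = y i := by
  rw [pre, pre, List.map_eq_map_iff]
  constructor
  · intro h i hi; exact h i (List.mem_range.2 hi)
  · intro h i hi; exact h i (List.mem_range.1 hi)

/-- the tree of attempts associated to the parameter `y` and input `x`. -/
def InTree (y x : ℕ → ℕ) (t : List ℕ) : Prop :=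
  ∀ k ≤ t.length, y (eP (pre x k, t.take k)) = 0

theorem InTree.take {y x : ℕ → ℕ} {t : List ℕ} (h : InTree y x t) {k : ℕ}
    (hk : k ≤ t.length) : InTree y x (t.take k) := by
  intro j hj
  rw [List.length_take] at hj
  have hjk : j ≤ k := le_trans hj (min_le_left _ _)
  rw [List.take_take, Nat.min_eq_left hjk]
  exact h j (le_trans hjk hk)

theorem InTree.prefix {y x : ℕ → ℕ} {t u : List ℕ} (h : InTree y x t) (hp : u <+: t) :
    InTree y x u := by
  have := h.take (k := u.length) hp.length_le
  rwa [← List.prefix_iff_eq_take.1 hp] at this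

/-- the Kleene–Brouwer linear order code attached to the tree of attempts. -/
def KBcode (y x : ℕ → ℕ) : LOCode :=
  (fun n => decide (InTree y x (eL.symm n)),
   fun q => decide (InTree y x (eL.symm q.1) ∧ InTree y x (eL.symm q.2) ∧
      KBle (eL.symm q.1) (eL.symm q.2)))

theorem KBcode_dom {y x : ℕ → ℕ} {n : ℕ} :
    (KBcode y x).dom n ↔ InTree y x (eL.symm n) := by
  simp [KBcode, LOCode.dom]

theorem KBcode_le {y x : ℕ → ℕ} {m n : ℕ} :
    (KBcode y x).le m n ↔ InTree y x (eL.symm m) ∧ InTree y x (eL.symm n) ∧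
      KBle (eL.symm m) (eL.symm n) := by
  simp [KBcode, LOCode.le]

theorem KBcode_isLO (y x : ℕ → ℕ) : (KBcode y x).IsLO := by
  refine ⟨?_, ?_, ?_, ?_, ?_⟩
  · intro m n h
    rw [KBcode_le] at h
    exact ⟨KBcode_dom.2 h.1, KBcode_dom.2 h.2.1⟩
  · intro m h
    rw [KBcode_dom] at h
    exact KBcode_le.2 ⟨h, h, KBle.refl _⟩
  · intro m n h h'
    rw [KBcode_le] at h h'
    have := KBle.antisymm h.2.2 h'.2.2
    have := congrArg eL this
    simpa using this
  · intro m n k h h'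
    rw [KBcode_le] at h h' ⊢
    exact ⟨h.1, h'.2.1, h.2.2.trans h'.2.2⟩
  · intro m n hm hn
    rw [KBcode_dom] at hm hn
    rcases KBle.total (eL.symm m) (eL.symm n) with h | h
    · exact Or.inl (KBcode_le.2 ⟨hm, hn, h⟩)
    · exact Or.inr (KBcode_le.2 ⟨hn, hm, h⟩)

theorem branch_iff {y x z : ℕ → ℕ} :
    (∀ n, InTree y x (pre z n)) ↔ ∀ n, y (eP (pre x n, pre z n)) = 0 := by
  constructor
  · intro h n
    have := h n n (by simp)
    rwa [pre_take z (le_refl n)] at this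
  · intro h n k hk
    rw [pre_length] at hk
    rw [pre_take z hk]
    exact h k

theorem exists_branch_iff_not_isWO (y x : ℕ → ℕ) :
    (∃ z : ℕ → ℕ, ∀ n, InTree y x (pre z n)) ↔ ¬ (KBcode y x).IsWO := by
  constructor
  · rintro ⟨z, hz⟩ ⟨_, hmin⟩
    obtain ⟨m, hm, hle⟩ := hmin (Set.range fun n => eL (pre z n)) ⟨eL (pre z 0), 0, rfl⟩
      (by rintro n ⟨j, rfl⟩; exact KBcode_dom.2 (by simpa using hz j))
    obtain ⟨j, rfl⟩ := hm
    have h2 := hle (eL (pre z (j + 1))) ⟨j + 1, rfl⟩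
    rw [KBcode_le] at h2
    simp only [Equiv.symm_apply_apply] at h2
    have hpp : pre z j <+: pre z (j + 1) := pre_prefix z (by omega)
    have hne : pre z j ≠ pre z (j + 1) := fun h => by
      have := congrArg List.length h; simp at this
    rcases h2.2.2 with h | h
    · exact (KBlt_of_proper_prefix hpp hne).asymm h
    · exact hne h
  · intro hW
    have hLO := KBcode_isLO y x
    have : ¬ ∀ s : Set ℕ, s.Nonempty → (∀ n ∈ s, (KBcode y x).dom n) →
        ∃ m ∈ s, ∀ n ∈ s, (KBcode y x).le m n := fun h => hW ⟨hLO, h⟩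
    push_neg at this
    obtain ⟨s, hne, hdom, hnomin⟩ := this
    -- build a strictly KB-descending sequence of elements of the tree
    have hstep : ∀ a : s, ∃ b : s, KBlt (eL.symm (b : ℕ)) (eL.symm (a : ℕ)) := by
      rintro ⟨a, ha⟩
      obtain ⟨b, hb, hnle⟩ := hnomin a ha
      have htot := hLO.2.2.2.2 b a (hdom b hb) (hdom a ha)
      have hle : (KBcode y x).le b a := by
        rcases htot with h | h
        · exact h
        · exact absurd h hnle
      rw [KBcode_le] at hle
      refine ⟨⟨b, hb⟩, ?_⟩
      rcases hle.2.2 with h | h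
      · exact h
      · exfalso
        have : b = a := by have := congrArg eL h; simpa using this
        subst this
        exact hnle (hLO.2.1 b (hdom b hb))
    choose g hg using hstep
    obtain ⟨a₀, ha₀⟩ := hne
    let u : ℕ → s := fun k => g^[k] ⟨a₀, ha₀⟩
    have hu : ∀ k, KBlt (eL.symm ((u (k + 1) : ℕ))) (eL.symm ((u k : ℕ))) := by
      intro k
      show KBlt (eL.symm ((g^[k+1] ⟨a₀, ha₀⟩ : ℕ))) _
      rw [Function.iterate_succ_apply']
      exact hg _
    obtain ⟨z, hz⟩ := exists_branch_of_KB_descending (fun k => eL.symm ((u k : ℕ))) hu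
    refine ⟨z, fun n => ?_⟩
    obtain ⟨m, hm⟩ := hz n
    have htree : InTree y x (eL.symm ((u m : ℕ))) := by
      have := hdom _ (u m).2
      rwa [KBcode_dom] at this
    have : InTree y x (pre z n) := htree.prefix (by simpa [pre] using hm)
    exact this

end
end KBMachinery

section Analytic
open MeasureTheory Filter Topology
open scoped Classical

theorem measurable_decide {α : Type*} [MeasurableSpace α] {P : α → Prop}
    [inst : ∀ a, Decidable (P a)]
    (h : MeasurableSet {a | P a}) : Measurable fun a => decide (P a) := by
  apply measurable_to_countable'
  intro b
  cases b with
  | false =>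
    have : (fun a => decide (P a)) ⁻¹' {false} = {a | P a}ᶜ := by
      ext a; simp
    rw [this]; exact h.compl
  | true =>
    have : (fun a => decide (P a)) ⁻¹' {true} = {a | P a} := by
      ext a; simp
    rw [this]; exact h

theorem measurableSet_pre_eq (k : ℕ) (s : List ℕ) :
    MeasurableSet {x : ℕ → ℕ | pre x k = s} := by
  by_cases hs : s.length = k
  · have : {x : ℕ → ℕ | pre x k = s} = ⋂ i ∈ Finset.range k, {x : ℕ → ℕ | x i = s.getD i 0} := by
      ext x
      simp only [Set.mem_setOf_eq, Set.mem_iInter, Finset.mem_range]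
      constructor
      · intro h i hi
        have h1 : (pre x k).getD i 0 = s.getD i 0 := by rw [h]
        rw [List.getD_eq_getElem _ _ (by simp [hi])] at h1
        simpa [pre, List.getElem_map _] using h1
      · intro h
        apply List.ext_getElem (by simp [hs])
        intro i h1 h2
        have hik : i < k := by simpa using h1
        have := h i hik
        rw [List.getD_eq_getElem _ _ h2] at this
        simpa [pre] using this
    rw [this]
    exact MeasurableSet.biInter (Set.to_countable _)
      (fun i _ => (measurable_pi_apply i) (MeasurableSet.singleton _))
  · have : {x : ℕ → ℕ | pre x k = s} = ∅ := by
      ext x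
      simp only [Set.mem_setOf_eq, Set.mem_empty_iff_false, iff_false]
      intro h
      exact hs (by rw [← h]; simp)
    rw [this]; exact MeasurableSet.empty

theorem measurable_pre_code (k : ℕ) (c : List ℕ) :
    Measurable fun x : ℕ → ℕ => eP (pre x k, c) := by
  apply measurable_to_countable'
  intro m
  have : (fun x : ℕ → ℕ => eP (pre x k, c)) ⁻¹' {m} =
      if c = (eP.symm m).2 then {x : ℕ → ℕ | pre x k = (eP.symm m).1} else ∅ := by
    ext x
    simp only [Set.mem_preimage, Set.mem_singleton_iff]
    rw [Equiv.apply_eq_iff_eq_symm_apply, Prod.ext_iff]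
    split_ifs with hc
    · simp [hc]
    · simp only [Set.mem_empty_iff_false, iff_false]
      rintro ⟨-, h2⟩; exact hc h2
  rw [this]
  split_ifs
  · exact measurableSet_pre_eq _ _
  · exact MeasurableSet.empty

theorem measurable_eval_pair : Measurable fun p : (ℕ → ℕ) × ℕ => p.1 p.2 :=
  measurable_from_prod_countable_left fun m => measurable_pi_apply m

theorem measurableSet_inTree (t : List ℕ) :
    MeasurableSet {p : (ℕ → ℕ) × (ℕ → ℕ) | InTree p.1 p.2 t} := by
  have : {p : (ℕ → ℕ) × (ℕ → ℕ) | InTree p.1 p.2 t} =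
      ⋂ k ∈ Finset.range (t.length + 1),
        {p : (ℕ → ℕ) × (ℕ → ℕ) | p.1 (eP (pre p.2 k, t.take k)) = 0} := by
    ext p
    simp only [Set.mem_setOf_eq, Set.mem_iInter, Finset.mem_range, InTree]
    exact ⟨fun h k hk => h k (by omega), fun h k hk => h k (by omega)⟩
  rw [this]
  refine MeasurableSet.biInter (Set.to_countable _) (fun k _ => ?_)
  have hmeas : Measurable fun p : (ℕ → ℕ) × (ℕ → ℕ) => p.1 (eP (pre p.2 k, t.take k)) :=
    measurable_eval_pair.comp
      (measurable_fst.prodMk ((measurable_pre_code k (t.take k)).comp measurable_snd))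
  exact hmeas (MeasurableSet.singleton 0)

theorem measurable_KBcode : Measurable fun p : (ℕ → ℕ) × (ℕ → ℕ) => KBcode p.1 p.2 := by
  apply Measurable.prod
  · apply measurable_pi_iff.2
    intro n
    exact measurable_decide (measurableSet_inTree (eL.symm n))
  · apply measurable_pi_iff.2
    intro q
    have hfun : (fun p : (ℕ → ℕ) × (ℕ → ℕ) => (KBcode p.1 p.2).2 q) =
        fun p : (ℕ → ℕ) × (ℕ → ℕ) => decide (InTree p.1 p.2 (eL.symm q.1) ∧
          InTree p.1 p.2 (eL.symm q.2) ∧ KBle (eL.symm q.1) (eL.symm q.2)) := by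
      funext p
      exact decide_eq_decide.2 Iff.rfl
    rw [hfun]
    apply measurable_decide
    have : {p : (ℕ → ℕ) × (ℕ → ℕ) | InTree p.1 p.2 (eL.symm q.1) ∧ InTree p.1 p.2 (eL.symm q.2)
        ∧ KBle (eL.symm q.1) (eL.symm q.2)} =
        ({p : (ℕ → ℕ) × (ℕ → ℕ) | InTree p.1 p.2 (eL.symm q.1)} ∩
         {p : (ℕ → ℕ) × (ℕ → ℕ) | InTree p.1 p.2 (eL.symm q.2)}) ∩
        (if KBle (eL.symm q.1) (eL.symm q.2) then Set.univ else ∅) := by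
      ext p
      split_ifs with hkb <;> simp [Set.mem_setOf_eq, hkb, and_assoc]
    rw [this]
    refine MeasurableSet.inter ((measurableSet_inTree _).inter (measurableSet_inTree _)) ?_
    split_ifs
    · exact MeasurableSet.univ
    · exact MeasurableSet.empty

/-- preimage of an analytic set under a Borel-measurable map is analytic. -/
theorem analyticSet_preimage_measurable {α β : Type*}
    [TopologicalSpace α] [PolishSpace α] [MeasurableSpace α] [BorelSpace α]
    [TopologicalSpace β] [T2Space β] [SecondCountableTopology β]
    [MeasurableSpace β] [BorelSpace β]
    {s : Set β} (hs : AnalyticSet s) {f : α → β} (hf : Measurable f) :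
    AnalyticSet (f ⁻¹' s) := by
  rw [AnalyticSet] at hs
  rcases hs with rfl | ⟨g, hgc, rfl⟩
  · rw [Set.preimage_empty]; exact analyticSet_empty
  · have hset : MeasurableSet {p : α × (ℕ → ℕ) | f p.1 = g p.2} := by
      have : {p : α × (ℕ → ℕ) | f p.1 = g p.2} =
          (fun p : α × (ℕ → ℕ) => (f p.1, g p.2)) ⁻¹' {q : β × β | q.1 = q.2} := rfl
      rw [this]
      exact ((hf.comp measurable_fst).prodMk (hgc.measurable.comp measurable_snd))
        isClosed_diagonal.measurableSet
    have himg := hset.analyticSet_image (f := (Prod.fst : α × (ℕ → ℕ) → α)) measurable_fst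
    have heq : f ⁻¹' Set.range g = Prod.fst '' {p : α × (ℕ → ℕ) | f p.1 = g p.2} := by
      ext a
      simp only [Set.mem_preimage, Set.mem_range, Set.mem_image, Set.mem_setOf_eq]
      constructor
      · rintro ⟨u, hu⟩; exact ⟨(a, u), hu.symm, rfl⟩
      · rintro ⟨⟨a', u⟩, h1, rfl⟩; exact ⟨u, h1.symm⟩
    rw [heq]; exact himg

theorem IsAnalyticSet.toAnalyticSet {α : Type*} [MeasurableSpace α] [TopologicalSpace α]
    [BorelSpace α] [SecondCountableTopology α] {s : Set α} (hs : IsAnalyticSet s) :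
    AnalyticSet s := by
  obtain ⟨B, f, hB, hf, rfl⟩ := hs
  exact hB.analyticSet_image hf

theorem tendsto_of_agree {u : ℕ → (ℕ → ℕ)} {v : ℕ → ℕ}
    (huv : ∀ n i, i < n → u n i = v i) : Tendsto u atTop (𝓝 v) := by
  rw [tendsto_pi_nhds]
  intro i
  apply Filter.Tendsto.congr' _ (tendsto_const_nhds (x := v i))
  filter_upwards [Filter.eventually_ge_atTop (i + 1)] with n hn
  exact (huv n i (by omega)).symm

theorem exists_code_of_continuous (h : (ℕ → ℕ) → (ℕ → ℕ)) (hc : Continuous h) :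
    ∃ y : ℕ → ℕ, ∀ x, ((∃ z, ∀ n, y (eP (pre x n, pre z n)) = 0) ↔ x ∈ Set.range h) := by
  set Q : List ℕ × List ℕ → Prop := fun st =>
    ∃ w : ℕ → ℕ, pre (h w) st.2.length = st.1 ∧ pre w st.2.length = st.2 with hQdef
  refine ⟨fun m => if Q (eP.symm m) then 0 else 1, fun x => ?_⟩
  constructor
  · rintro ⟨z, hz⟩
    have hQ : ∀ n, Q (pre x n, pre z n) := by
      intro n
      have h0 := hz n
      simp only [Equiv.symm_apply_apply] at h0
      by_contra hq
      rw [if_neg hq] at h0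
      exact one_ne_zero h0
    have hQ' : ∀ n, ∃ w : ℕ → ℕ, pre (h w) n = pre x n ∧ pre w n = pre z n := by
      intro n
      obtain ⟨w, hw1, hw2⟩ := hQ n
      rw [pre_length] at hw1 hw2
      exact ⟨w, hw1, hw2⟩
    choose w hw1 hw2 using hQ'
    have hwz : Tendsto w atTop (𝓝 z) :=
      tendsto_of_agree (fun n i hi => pre_eq_iff.1 (hw2 n) i hi)
    have h1 : Tendsto (fun n => h (w n)) atTop (𝓝 (h z)) := (hc.tendsto z).comp hwz
    have h2 : Tendsto (fun n => h (w n)) atTop (𝓝 x) :=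
      tendsto_of_agree (fun n i hi => pre_eq_iff.1 (hw1 n) i hi)
    exact ⟨z, tendsto_nhds_unique h1 h2⟩
  · rintro ⟨z, rfl⟩
    refine ⟨z, fun n => ?_⟩
    simp only [Equiv.symm_apply_apply]
    rw [if_pos ⟨z, by simp, by simp⟩]

/-- The set of codes of countable well-orders is not analytic. -/
theorem WOset_not_analyticSet : ¬ AnalyticSet {I : LOCode | I.IsWO} := by
  intro H
  have hmeas : Measurable fun y : ℕ → ℕ => KBcode y y :=
    measurable_KBcode.comp (measurable_id.prodMk measurable_id)
  have hD : AnalyticSet {y : ℕ → ℕ | (KBcode y y).IsWO} :=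
    analyticSet_preimage_measurable H hmeas
  obtain ⟨y₀, hy₀⟩ : ∃ y₀ : ℕ → ℕ, ∀ x,
      ((∃ z, ∀ n, y₀ (eP (pre x n, pre z n)) = 0) ↔ (KBcode x x).IsWO) := by
    rw [AnalyticSet] at hD
    rcases hD with hemp | ⟨g, hgc, hgr⟩
    · refine ⟨fun _ => 1, fun x => ?_⟩
      constructor
      · rintro ⟨z, hz⟩
        exact absurd (hz 0) one_ne_zero
      · intro hx
        exact absurd (hemp ▸ hx : x ∈ (∅ : Set (ℕ → ℕ))) (Set.notMem_empty x)
    · obtain ⟨y₀, hy₀⟩ := exists_code_of_continuous g hgc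
      refine ⟨y₀, fun x => (hy₀ x).trans ?_⟩
      rw [hgr]; rfl
  have h1 := hy₀ y₀
  have h2 : (∃ z, ∀ n, y₀ (eP (pre y₀ n, pre z n)) = 0) ↔ ¬ (KBcode y₀ y₀).IsWO := by
    rw [← exists_branch_iff_not_isWO y₀ y₀]
    exact exists_congr fun z => branch_iff.symm
  have h3 : (KBcode y₀ y₀).IsWO ↔ ¬ (KBcode y₀ y₀).IsWO := h1.symm.trans h2
  exact iff_not_self h3
end Analytic


section Outer
open MeasureTheory Filter Topology
open scoped Classical

theorem measurableSet_dom (m : ℕ) : MeasurableSet {I : LOCode | I.dom m} := by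
  have : {I : LOCode | I.dom m} = (fun I : LOCode => I.1 m) ⁻¹' {true} := rfl
  rw [this]
  exact ((measurable_pi_apply m).comp measurable_fst) (MeasurableSet.singleton true)

theorem measurableSet_leSet (m n : ℕ) : MeasurableSet {I : LOCode | I.le m n} := by
  have : {I : LOCode | I.le m n} = (fun I : LOCode => I.2 (m, n)) ⁻¹' {true} := rfl
  rw [this]
  exact ((measurable_pi_apply (m, n)).comp measurable_snd) (MeasurableSet.singleton true)

theorem measurableSet_imp {α : Type*} [MeasurableSpace α] {P Q : α → Prop}
    (hP : MeasurableSet {a | P a}) (hQ : MeasurableSet {a | Q a}) :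
    MeasurableSet {a | P a → Q a} := by
  have : {a | P a → Q a} = {a | P a}ᶜ ∪ {a | Q a} := by
    ext a; simp [imp_iff_not_or]
  rw [this]
  exact hP.compl.union hQ

theorem measurableSet_const_prop {α : Type*} [MeasurableSpace α] (p : Prop) :
    MeasurableSet {a : α | p} := by
  by_cases hp : p
  · have : {a : α | p} = Set.univ := by ext a; simp [hp]
    rw [this]; exact MeasurableSet.univ
  · have : {a : α | p} = ∅ := by ext a; simp [hp]
    rw [this]; exact MeasurableSet.empty

theorem measurableSet_isLO : MeasurableSet {I : LOCode | I.IsLO} := by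
  have h1 : MeasurableSet {I : LOCode | ∀ m n, I.le m n → I.dom m ∧ I.dom n} := by
    rw [Set.setOf_forall]
    refine MeasurableSet.iInter (fun m => ?_)
    rw [Set.setOf_forall]
    refine MeasurableSet.iInter (fun n => ?_)
    exact measurableSet_imp (measurableSet_leSet m n)
      ((measurableSet_dom m).inter (measurableSet_dom n))
  have h2 : MeasurableSet {I : LOCode | ∀ m, I.dom m → I.le m m} := by
    rw [Set.setOf_forall]
    refine MeasurableSet.iInter (fun m => ?_)
    exact measurableSet_imp (measurableSet_dom m) (measurableSet_leSet m m)
  have h3 : MeasurableSet {I : LOCode | ∀ m n, I.le m n → I.le n m → m = n} := by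
    rw [Set.setOf_forall]
    refine MeasurableSet.iInter (fun m => ?_)
    rw [Set.setOf_forall]
    refine MeasurableSet.iInter (fun n => ?_)
    exact measurableSet_imp (measurableSet_leSet m n)
      (measurableSet_imp (measurableSet_leSet n m) (measurableSet_const_prop _))
  have h4 : MeasurableSet {I : LOCode | ∀ m n k, I.le m n → I.le n k → I.le m k} := by
    rw [Set.setOf_forall]
    refine MeasurableSet.iInter (fun m => ?_)
    rw [Set.setOf_forall]
    refine MeasurableSet.iInter (fun n => ?_)
    rw [Set.setOf_forall]
    refine MeasurableSet.iInter (fun k => ?_)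
    exact measurableSet_imp (measurableSet_leSet m n)
      (measurableSet_imp (measurableSet_leSet n k) (measurableSet_leSet m k))
  have h5 : MeasurableSet {I : LOCode | ∀ m n, I.dom m → I.dom n → I.le m n ∨ I.le n m} := by
    rw [Set.setOf_forall]
    refine MeasurableSet.iInter (fun m => ?_)
    rw [Set.setOf_forall]
    refine MeasurableSet.iInter (fun n => ?_)
    refine measurableSet_imp (measurableSet_dom m) (measurableSet_imp (measurableSet_dom n) ?_)
    exact (measurableSet_leSet m n).union (measurableSet_leSet n m)
  have : {I : LOCode | I.IsLO} = ({I : LOCode | ∀ m n, I.le m n → I.dom m ∧ I.dom n} ∩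
      {I : LOCode | ∀ m, I.dom m → I.le m m}) ∩ (({I : LOCode | ∀ m n, I.le m n → I.le n m → m = n} ∩
      {I : LOCode | ∀ m n k, I.le m n → I.le n k → I.le m k}) ∩
      {I : LOCode | ∀ m n, I.dom m → I.dom n → I.le m n ∨ I.le n m}) := by
    ext I
    simp only [LOCode.IsLO, Set.mem_setOf_eq, Set.mem_inter_iff]
    tauto
  rw [this]
  exact (h1.inter h2).inter ((h3.inter h4).inter h5)

theorem omegaStar_isLO : LOCode.omegaStar.IsLO := by
  refine ⟨?_, ?_, ?_, ?_, ?_⟩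
  · intro m n _; exact ⟨rfl, rfl⟩
  · intro m _
    simp [LOCode.le, LOCode.omegaStar]
  · intro m n h h'
    simp only [LOCode.le, LOCode.omegaStar, decide_eq_true_eq] at h h'
    omega
  · intro m n k h h'
    simp only [LOCode.le, LOCode.omegaStar, decide_eq_true_eq] at h h' ⊢
    omega
  · intro m n _ _
    simp only [LOCode.le, LOCode.omegaStar, decide_eq_true_eq]
    omega

/-- an ill-founded countable linear order receives an embedding of `ω*`. -/
theorem omegaStar_embeds_of_not_isWO {I : LOCode} (hLO : I.IsLO) (hW : ¬ I.IsWO) :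
    LOCode.Embeds LOCode.omegaStar I := by
  have : ¬ ∀ s : Set ℕ, s.Nonempty → (∀ n ∈ s, I.dom n) → ∃ m ∈ s, ∀ n ∈ s, I.le m n :=
    fun h => hW ⟨hLO, h⟩
  push_neg at this
  obtain ⟨s, hne, hdom, hnomin⟩ := this
  have hstep : ∀ a : s, ∃ b : s, I.le (b : ℕ) (a : ℕ) ∧ (b : ℕ) ≠ (a : ℕ) := by
    rintro ⟨a, ha⟩
    obtain ⟨b, hb, hnle⟩ := hnomin a ha
    have htot := hLO.2.2.2.2 b a (hdom b hb) (hdom a ha)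
    have hle : I.le b a := by
      rcases htot with h | h
      · exact h
      · exact absurd h hnle
    refine ⟨⟨b, hb⟩, hle, fun hba => ?_⟩
    apply hnle
    have hba' : b = a := hba
    rw [hba']
    exact hLO.2.1 a (hdom a ha)
  choose g hg1 hg2 using hstep
  obtain ⟨a₀, ha₀⟩ := hne
  let u : ℕ → s := fun k => g^[k] ⟨a₀, ha₀⟩
  have husucc : ∀ k, u (k + 1) = g (u k) := fun k => Function.iterate_succ_apply' g k _
  have hustep : ∀ k, I.le ((u (k + 1) : ℕ)) ((u k : ℕ)) ∧ ((u (k + 1) : ℕ)) ≠ ((u k : ℕ)) := by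
    intro k
    rw [husucc k]
    exact ⟨hg1 (u k), hg2 (u k)⟩
  have hchain : ∀ j i, i < j → I.le ((u j : ℕ)) ((u i : ℕ)) ∧ ((u j : ℕ)) ≠ ((u i : ℕ)) := by
    intro j
    induction j with
    | zero => intro i hi; omega
    | succ j ih =>
      intro i hi
      rcases Nat.lt_or_ge i j with h | h
      · obtain ⟨h1, h2⟩ := ih i h
        refine ⟨hLO.2.2.2.1 _ _ _ (hustep j).1 h1, fun heq => ?_⟩
        have h3 := (hustep j).1
        rw [heq] at h3
        exact h2 (hLO.2.2.1 _ _ h1 h3)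
      · have : i = j := by omega
        subst this
        exact hustep i
  refine ⟨fun k => ((u k : ℕ)), fun n _ => hdom _ (u n).2, fun m n _ _ => ?_⟩
  simp only [LOCode.le, LOCode.omegaStar, decide_eq_true_eq]
  constructor
  · intro hnm
    rcases Nat.lt_or_ge n m with h | h
    · exact (hchain m n h).1
    · have : m = n := by omega
      subst this
      exact hLO.2.1 _ (hdom _ (u m).2)
  · intro hle
    by_contra hnm
    have hmn : m < n := by omega
    obtain ⟨h1, h2⟩ := hchain n m hmn
    exact h2 (hLO.2.2.1 _ _ h1 hle)

theorem analyticSet_inter {α : Type*} [TopologicalSpace α] [T2Space α] {s t : Set α}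
    (hs : AnalyticSet s) (ht : AnalyticSet t) : AnalyticSet (s ∩ t) := by
  have : s ∩ t = ⋂ b : Bool, (bif b then s else t) := by
    ext a
    simp [Bool.forall_bool]
    tauto
  rw [this]
  exact AnalyticSet.iInter (fun b => by cases b <;> simpa)

end Outer

/-- **Transfer theorem (dual form).**  Let `X ⊆ Z`, `Y ⊆ W` be analytic subsets
of standard Borel spaces, `K : X → Y` an analytic map, `(E_α)_{α<ω₁}` a
uniformly analytic refining family of equivalence relations on `X`, given by an
analytic refining set `R ⊆ X² × LO` with `E_α = R_α` at countable well-orders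
and `R_{ω*} = ⋂_{α<ω₁} E_α = E_∞`, and `F` a Borel equivalence relation on `Y`.
If `x E_∞ x'` implies `K(x) F K(x')`, then there is a countable ordinal `β`
(coded by a countable well-order) such that already `x E_β x'` implies
`K(x) F K(x')`. -/
theorem transfer_of_classification_up
    {Z W : Type*} [MeasurableSpace Z] [StandardBorelSpace Z]
    [MeasurableSpace W] [StandardBorelSpace W]
    (X : Set Z) (Y : Set W) (hX : IsAnalyticSet X) (hY : IsAnalyticSet Y)
    (K : Z → W) (hKY : ∀ x ∈ X, K x ∈ Y)
    (hKan : IsAnalyticSet {p : Z × W | p.1 ∈ X ∧ p.2 = K p.1})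
    (R : Set ((Z × Z) × LOCode)) (hRan : IsAnalyticSet R) (hRref : Refining R)
    (hRLO : ∀ p ∈ R, p.2.IsLO)
    (hEeq : ∀ I : LOCode, I.IsWO → IsEquivOn X (LOsection R I))
    (hEinf : LOsection R LOCode.omegaStar = ⋂ I ∈ {I : LOCode | I.IsWO}, LOsection R I)
    (F : Set (W × W)) (hF : MeasurableSet F) (hFeq : IsEquivOn Y F)
    (h : ∀ x ∈ X, ∀ x' ∈ X,
      (x, x') ∈ LOsection R LOCode.omegaStar → (K x, K x') ∈ F) :
    ∃ I : LOCode, I.IsWO ∧ ∀ x ∈ X, ∀ x' ∈ X,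
      (x, x') ∈ LOsection R I → (K x, K x') ∈ F := by
  classical
  obtain ⟨τZ, hbZ, hpZ⟩ := (inferInstance : StandardBorelSpace Z).polish
  obtain ⟨τW, hbW, hpW⟩ := (inferInstance : StandardBorelSpace W).polish
  letI := τZ; haveI := hbZ; haveI := hpZ
  letI := τW; haveI := hbW; haveI := hpW
  haveI : PolishSpace Bool := inferInstance
  by_contra hcon
  push_neg at hcon
  -- hcon : ∀ I, I.IsWO → ∃ x ∈ X, ∃ x' ∈ X, (x, x') ∈ LOsection R I ∧ (K x, K x') ∉ F
  set GK : Set (Z × W) := {p : Z × W | p.1 ∈ X ∧ p.2 = K p.1} with hGK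
  have hGKan : MeasureTheory.AnalyticSet GK := hKan.toAnalyticSet
  have hRan' : MeasureTheory.AnalyticSet R := hRan.toAnalyticSet
  -- the big product space and the pieces of the bad set
  have hf1 : Continuous (fun p : (Z × Z) × (W × W) × LOCode => (p.1.1, p.2.1.1)) := by fun_prop
  have hf2 : Continuous (fun p : (Z × Z) × (W × W) × LOCode => (p.1.2, p.2.1.2)) := by fun_prop
  have hf3 : Continuous (fun p : (Z × Z) × (W × W) × LOCode => (p.1, p.2.2)) := by fun_prop
  have hf4 : Continuous (fun p : (Z × Z) × (W × W) × LOCode => p.2.1) := by fun_prop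
  have hf5 : Continuous (fun p : (Z × Z) × (W × W) × LOCode => p.2.2) := by fun_prop
  set A1 : Set ((Z × Z) × (W × W) × LOCode) :=
    (fun p : (Z × Z) × (W × W) × LOCode => (p.1.1, p.2.1.1)) ⁻¹' GK with hA1
  set A2 : Set ((Z × Z) × (W × W) × LOCode) :=
    (fun p : (Z × Z) × (W × W) × LOCode => (p.1.2, p.2.1.2)) ⁻¹' GK with hA2
  set A3 : Set ((Z × Z) × (W × W) × LOCode) :=
    (fun p : (Z × Z) × (W × W) × LOCode => (p.1, p.2.2)) ⁻¹' R with hA3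
  set A4 : Set ((Z × Z) × (W × W) × LOCode) :=
    (fun p : (Z × Z) × (W × W) × LOCode => p.2.1) ⁻¹' Fᶜ with hA4
  set A5 : Set ((Z × Z) × (W × W) × LOCode) :=
    (fun p : (Z × Z) × (W × W) × LOCode => p.2.2) ⁻¹' {I : LOCode | I.IsLO} with hA5
  have hA1an : MeasureTheory.AnalyticSet A1 := hGKan.preimage hf1
  have hA2an : MeasureTheory.AnalyticSet A2 := hGKan.preimage hf2
  have hA3an : MeasureTheory.AnalyticSet A3 := hRan'.preimage hf3
  have hA4an : MeasureTheory.AnalyticSet A4 := (hf4.measurable hF.compl).analyticSet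
  have hA5an : MeasureTheory.AnalyticSet A5 := (hf5.measurable measurableSet_isLO).analyticSet
  set G : Set ((Z × Z) × (W × W) × LOCode) := A1 ∩ (A2 ∩ (A3 ∩ (A4 ∩ A5))) with hG
  have hGan : MeasureTheory.AnalyticSet G :=
    analyticSet_inter hA1an (analyticSet_inter hA2an
      (analyticSet_inter hA3an (analyticSet_inter hA4an hA5an)))
  set Bad : Set LOCode := (fun p : (Z × Z) × (W × W) × LOCode => p.2.2) '' G with hBad
  have hBadan : MeasureTheory.AnalyticSet Bad := hGan.image_of_continuous hf5
  have hBadLO : ∀ I ∈ Bad, I.IsLO := by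
    rintro I ⟨p, hp, rfl⟩
    exact hp.2.2.2.2
  have hBadwit : ∀ I ∈ Bad, ∃ x x', x ∈ X ∧ x' ∈ X ∧ ((x, x'), I) ∈ R ∧ (K x, K x') ∉ F := by
    rintro I ⟨p, hp, rfl⟩
    have hp1 : p.1.1 ∈ X ∧ p.2.1.1 = K p.1.1 := hp.1
    have hp2 : p.1.2 ∈ X ∧ p.2.1.2 = K p.1.2 := hp.2.1
    have hp3 : ((p.1.1, p.1.2), p.2.2) ∈ R := hp.2.2.1
    have hp4 : (p.2.1.1, p.2.1.2) ∉ F := hp.2.2.2.1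
    refine ⟨p.1.1, p.1.2, hp1.1, hp2.1, hp3, fun hmem => hp4 ?_⟩
    rw [hp1.2, hp2.2]
    exact hmem
  have hWOsub : ∀ I, I.IsWO → I ∈ Bad := by
    intro I hWO
    obtain ⟨x, hx, x', hx', hRmem, hFnot⟩ := hcon I hWO
    exact ⟨((x, x'), ((K x, K x'), I)),
      ⟨⟨hx, rfl⟩, ⟨hx', rfl⟩, hRmem, hFnot, hWO.1⟩, rfl⟩
  by_cases hsub : ∀ I ∈ Bad, I.IsWO
  · have hBadWO : Bad = {I : LOCode | I.IsWO} :=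
      Set.Subset.antisymm hsub (fun I hI => hWOsub I hI)
    exact WOset_not_analyticSet (hBadWO ▸ hBadan)
  · push_neg at hsub
    obtain ⟨I, hIBad, hIW⟩ := hsub
    have hILO := hBadLO I hIBad
    obtain ⟨x, x', hx, hx', hRmem, hFnot⟩ := hBadwit I hIBad
    have hemb := omegaStar_embeds_of_not_isWO hILO hIW
    have hsub2 := hRref LOCode.omegaStar I omegaStar_isLO hILO hemb
    exact hFnot (h x hx x' hx' (hsub2 hRmem))
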